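/- Let n ≥ 3 be a natural number and let C be an equitable proper coloring of the flower graph F_n that uses exactly n+1 colors, with colors indexed so that the class sizes are non-increasing. Then the equitable coloring mean of C equals (n+1)^2/(2n+1). -/
import Mathlib


open Finset

/-- The size of the color class of color `i` under the coloring `c`. -/
def classSize {V : Type*} [Fintype V] {k : ℕ} (c : V → Fin k) (i : Fin k) : ℕ :=
  (Finset.univ.filter (fun v => c v = i)).card

/-- The equitable coloring mean `μ = (∑ i·θ_i)/N` (colors indexed `1,…,k`). -/
def eqMean {V : Type*} [Fintype V] {k : ℕ} (c : V → Fin k) : ℚ :=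
  (∑ i : Fin k, (((i : ℕ) : ℚ) + 1) * (classSize c i : ℚ)) / (Fintype.card V : ℚ)

/-- The equitable coloring variance `σ² = (∑ i²·θ_i)/N − μ²`. -/
def eqVar {V : Type*} [Fintype V] {k : ℕ} (c : V → Fin k) : ℚ :=
  (∑ i : Fin k, (((i : ℕ) : ℚ) + 1) ^ 2 * (classSize c i : ℚ)) / (Fintype.card V : ℚ)
    - (eqMean c) ^ 2

/-- The flower graph `F_n`: the helm graph together with edges joining every pendant
vertex `u_i` to the central vertex. -/
def flowerGraph (n : ℕ) : SimpleGraph (Option (Fin n ⊕ Fin n)) :=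
  SimpleGraph.fromRel (fun a b =>
    match a, b with
    | none, some _ => True
    | some (Sum.inl i), some (Sum.inl j) => j.val = (i.val + 1) % n
    | some (Sum.inl i), some (Sum.inr j) => i = j
    | _, _ => False)

lemma gauss_aux (n : ℕ) : ∑ j ∈ Finset.range (n+1), ((j:ℚ)+1) = ((n:ℚ)+1)*((n:ℚ)+2)/2 := by
  induction n with
  | zero => norm_num
  | succ m ih =>
    rw [Finset.sum_range_succ, ih]
    push_cast
    ring

theorem flower_eqMean (n : ℕ) (hn : 3 ≤ n)
    (c : Option (Fin n ⊕ Fin n) → Fin (n + 1))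
    (hproper : ∀ u v, (flowerGraph n).Adj u v → c u ≠ c v)
    (hsurj : Function.Surjective c)
    (hequit : ∀ i j : Fin (n + 1), classSize c i ≤ classSize c j + 1)
    (hmono : ∀ i j : Fin (n + 1), i ≤ j → classSize c j ≤ classSize c i) :
    eqMean c = ((n : ℚ) + 1) ^ 2 / (2 * (n : ℚ) + 1) := by
  have hcard : Fintype.card (Option (Fin n ⊕ Fin n)) = 2 * n + 1 := by
    simp [Fintype.card_option, Fintype.card_sum]; ring
  have hsum : ∑ i : Fin (n+1), classSize c i = 2 * n + 1 := by
    rw [← hcard, ← Finset.card_univ,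
      Finset.card_eq_sum_card_fiberwise (f := c) (fun x _ => Finset.mem_univ _)]
    rfl
  have hpos : ∀ i, 1 ≤ classSize c i := by
    intro i
    obtain ⟨v, hv⟩ := hsurj i
    exact Finset.card_pos.mpr ⟨v, by simp [hv]⟩
  have hlastle : ∀ i, classSize c (Fin.last n) ≤ classSize c i :=
    fun i => hmono i (Fin.last n) (Fin.le_last i)
  have hlast : classSize c (Fin.last n) = 1 := by
    have h1 : (n+1) * classSize c (Fin.last n) ≤ 2*n+1 := by
      calc (n+1) * classSize c (Fin.last n)
          = ∑ _i : Fin (n+1), classSize c (Fin.last n) := by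
            simp [Finset.sum_const, Finset.card_univ, mul_comm]
        _ ≤ ∑ i, classSize c i := Finset.sum_le_sum (fun i _ => hlastle i)
        _ = 2*n+1 := hsum
    nlinarith [hpos (Fin.last n)]
  have hle2 : ∀ i, classSize c i ≤ 2 := by
    intro i; have := hequit i (Fin.last n); omega
  set g : Fin (n+1) → ℕ := fun i => if i = Fin.last n then 1 else 2 with hg
  have hgsum : ∑ i, g i = 2*n+1 := by
    rw [Finset.sum_eq_sum_sdiff_singleton_add (Finset.mem_univ (Fin.last n)) g]
    have h1 : ∀ i ∈ Finset.univ \ {Fin.last n}, g i = 2 := by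
      intro i hi
      simp only [Finset.mem_sdiff, Finset.mem_singleton] at hi
      simp [hg, hi.2]
    rw [Finset.sum_congr rfl h1, Finset.sum_const, Finset.card_sdiff_of_subset (by simp)]
    simp [hg]
    omega
  have hθg : ∀ i, classSize c i = g i := by
    have := (Finset.sum_eq_sum_iff_of_le (s := (Finset.univ : Finset (Fin (n+1))))
      (f := classSize c) (g := g) ?_).mp (hsum.trans hgsum.symm)
    · exact fun i => this i (Finset.mem_univ i)
    · intro i _
      by_cases h : i = Fin.last n
      · simp [hg, h, hlast]
      · simp [hg, h, hle2 i]
  rw [eqMean, hcard]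
  have hnum : ∑ i : Fin (n+1), (((i : ℕ) : ℚ) + 1) * (classSize c i : ℚ)
      = ((n:ℚ)+1)^2 := by
    have h1 : ∀ i : Fin (n+1), (((i : ℕ) : ℚ) + 1) * (classSize c i : ℚ)
        = 2 * (((i : ℕ) : ℚ) + 1) - (if i = Fin.last n then ((i : ℕ) : ℚ) + 1 else 0) := by
      intro i
      rw [hθg i]
      by_cases h : i = Fin.last n <;> simp [hg, h] <;> ring
    rw [Finset.sum_congr rfl (fun i _ => h1 i), Finset.sum_sub_distrib,
      Finset.sum_ite_eq' Finset.univ (Fin.last n) (fun i : Fin (n+1) => ((i : ℕ) : ℚ) + 1)]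
    simp only [Finset.mem_univ, if_true, Fin.val_last]
    rw [← Finset.mul_sum, Fin.sum_univ_eq_sum_range (fun j => ((j:ℚ)+1))]
    rw [gauss_aux n]
    ring
  rw [hnum]
  push_cast
  ring_nf
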